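/- Every asymptotic 2-coloring c of the plane satisfies p(c) ≥ 1/3. -/

import Mathlib

/-!
Drop a random unit equilateral triangle `a`, `a + dir θ`, `a + dir (θ + π/3)` on the table.
Two of its three vertices have the same colour. Each side is a unit needle, and its
distribution is dominated by that of the needle `(a, θ)`: for the second side a rotation of `θ`
is all that is needed, and for the third side a translation of the base point by `dir θ` as
well. So the measure of monochromatic needles, times three, is at least the measure of triangles
with every vertex on the table. On `[-R, R]²` every triangle based in `[-(R-1), R-1]²` has this
property, which gives `p^table_R(c) ≥ (1 - 1/R)² / 3`.
-/

open MeasureTheory Real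

noncomputable section

abbrev Plane := EuclideanSpace ℝ (Fin 2)

def vec (x y : ℝ) : Plane := (WithLp.equiv 2 (Fin 2 → ℝ)).symm ![x, y]

def dir (θ : ℝ) : Plane := vec (Real.cos θ) (Real.sin θ)

/-- The fundamental parallelogram `{t•u + s•v : 0 ≤ t, s < 1}`. -/
def para (u v : Plane) : Set Plane :=
  {x | ∃ t s : ℝ, 0 ≤ t ∧ t < 1 ∧ 0 ≤ s ∧ s < 1 ∧ x = t • u + s • v}

/-- `p^per(c)` for a periodic coloring with fundamental parallelogram `para u v`. -/
def pper {k : ℕ} (c : Plane → Fin k) (u v : Plane) : ℝ :=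
  (1 / (2 * π * (volume (para u v)).toReal)) *
    ∫ a in para u v, ∫ θ in (0:ℝ)..(2*π),
      (if c a = c (a + dir θ) then (1:ℝ) else 0)

/-- The square `[-R, R]²`. -/
def square (R : ℝ) : Set Plane := {x | x 0 ∈ Set.Icc (-R) R ∧ x 1 ∈ Set.Icc (-R) R}

-- `p^table(c)` on the "table" `P`: the conditional probability that both endpoints of a
-- random needle have the same color, given that the second endpoint also lands in `P`.
open Classical in
def ptableSet {k : ℕ} (c : Plane → Fin k) (P : Set Plane) : ℝ :=
  (∫ a in P, ∫ θ in (0:ℝ)..(2*π),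
      (if c a = c (a + dir θ) ∧ a + dir θ ∈ P then (1:ℝ) else 0)) /
  (∫ a in P, ∫ θ in (0:ℝ)..(2*π), (if a + dir θ ∈ P then (1:ℝ) else 0))

/-- `p^table_R(c)`, on the square table `[-R, R]²`. -/
def ptable {k : ℕ} (c : Plane → Fin k) (R : ℝ) : ℝ := ptableSet c (square R)

open Set Filter

theorem continuous_dir : Continuous dir := by
  refine (PiLp.continuous_toLp 2 _).comp (continuous_pi fun i => ?_)
  fin_cases i
  exacts [Real.continuous_cos, Real.continuous_sin]

theorem measurable_dir : Measurable dir := continuous_dir.measurable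

theorem periodic_dir : Function.Periodic dir (2 * π) := fun θ => by
  simp only [dir, Real.cos_add_two_pi, Real.sin_add_two_pi]

theorem dir_add_dir_add_two_pi_div_three (θ : ℝ) :
    dir θ + dir (θ + 2 * π / 3) = dir (θ + π / 3) := by
  have hcos : Real.cos (2 * π / 3) = -(1 / 2) := by
    rw [show 2 * π / 3 = π - π / 3 by ring, Real.cos_pi_sub, Real.cos_pi_div_three]
  have hsin : Real.sin (2 * π / 3) = √3 / 2 := by
    rw [show 2 * π / 3 = π - π / 3 by ring, Real.sin_pi_sub, Real.sin_pi_div_three]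
  ext i
  fin_cases i <;>
    simp [dir, vec, Real.cos_add, Real.sin_add, Real.cos_pi_div_three, Real.sin_pi_div_three,
      hcos, hsin] <;> ring

theorem fin_two_eq_or_eq_or_eq (x y z : Fin 2) : x = y ∨ x = z ∨ y = z := by
  revert x y z; decide

theorem volume_preimage_add_inter_Ioc {T : Set ℝ} (hT : MeasurableSet T) {p : ℝ} (hp : 0 < p)
    (hper : Function.Periodic (· ∈ T) p) (s : ℝ) :
    volume ((· + s) ⁻¹' T ∩ Ioc 0 p) = volume (T ∩ Ioc 0 p) := by
  have hinv : ∀ g : AddSubgroup.zmultiples p, (g +ᵥ ·) ⁻¹' T = T := by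
    rintro ⟨_, n, rfl⟩
    ext x
    simpa [add_comm] using (hper.zsmul n x).to_iff
  calc volume ((· + s) ⁻¹' T ∩ Ioc 0 p)
      = volume ((· + s) ⁻¹' (T ∩ Ioc s (s + p))) := by simp
    _ = volume (T ∩ Ioc s (s + p)) := measure_preimage_add_right _ _ _
    _ = volume (T ∩ Ioc 0 (0 + p)) :=
      (isAddFundamentalDomain_Ioc hp s).measure_set_eq (isAddFundamentalDomain_Ioc hp 0) hT hinv
    _ = volume (T ∩ Ioc 0 p) := by rw [zero_add]

def needleMeasure (P : Set Plane) : Measure (Plane × ℝ) :=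
  (volume.restrict P).prod (volume.restrict (Ioc 0 (2 * π)))

def landingNeedles (P : Set Plane) : Set (Plane × ℝ) := {x | x.1 + dir x.2 ∈ P}

def sameColorNeedles {k : ℕ} (c : Plane → Fin k) (P : Set Plane) : Set (Plane × ℝ) :=
  {x | c x.1 = c (x.1 + dir x.2) ∧ x.1 + dir x.2 ∈ P}

def rotateNeedle (s : ℝ) (x : Plane × ℝ) : Plane × ℝ := (x.1, x.2 + s)

def hopNeedle (x : Plane × ℝ) : Plane × ℝ := (x.1 + dir x.2, x.2)

theorem measurable_add_dir : Measurable fun x : Plane × ℝ => x.1 + dir x.2 :=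
  measurable_fst.add (measurable_dir.comp measurable_snd)

theorem measurable_rotateNeedle (s : ℝ) : Measurable (rotateNeedle s) :=
  measurable_fst.prodMk (measurable_snd.add_const s)

theorem measurable_hopNeedle : Measurable hopNeedle :=
  measurable_add_dir.prodMk measurable_snd

theorem periodic_mem_sameColorNeedles {k : ℕ} (c : Plane → Fin k) (P : Set Plane) (a : Plane) :
    Function.Periodic (fun θ => (a, θ) ∈ sameColorNeedles c P) (2 * π) := fun θ => by
  simp [sameColorNeedles, periodic_dir θ]

theorem integral_indicator_eq_needleMeasure (P : Set Plane) {S : Set (Plane × ℝ)}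
    (hS : MeasurableSet S) :
    ∫ a in P, ∫ θ in (0:ℝ)..(2 * π), S.indicator 1 (a, θ) = (needleMeasure P S).toReal := by
  have hinner : ∀ a : Plane, ∫ θ in (0:ℝ)..(2 * π), S.indicator 1 (a, θ) =
      (volume.restrict (Ioc 0 (2 * π)) (Prod.mk a ⁻¹' S)).toReal := fun a => by
    rw [intervalIntegral.integral_of_le (by positivity),
      ← measureReal_def, ← integral_indicator_one (measurable_prodMk_left hS)]
    rfl
  simp_rw [hinner]
  rw [integral_toReal (measurable_measure_prodMk_left hS).aemeasurable
    (ae_of_all _ fun a => measure_lt_top _ _),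
    needleMeasure, Measure.prod_apply hS]

theorem needleMeasure_univ (P : Set Plane) :
    needleMeasure P univ = volume P * ENNReal.ofReal (2 * π) := by
  rw [needleMeasure, ← univ_prod_univ, Measure.prod_prod, Measure.restrict_apply_univ,
    Measure.restrict_apply_univ, Real.volume_Ioc, sub_zero]

section

variable {P : Set Plane}

theorem measurableSet_landingNeedles (hP : MeasurableSet P) :
    MeasurableSet (landingNeedles P) :=
  measurable_add_dir hP

theorem measurableSet_sameColorNeedles {k : ℕ} {c : Plane → Fin k} (hc : Measurable c)
    (hP : MeasurableSet P) : MeasurableSet (sameColorNeedles c P) :=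
  (measurableSet_eq_fun (hc.comp measurable_fst) (hc.comp measurable_add_dir)).inter
    (measurable_add_dir hP)

theorem needleMeasure_preimage_rotateNeedle {S : Set (Plane × ℝ)} (hS : MeasurableSet S)
    (hper : ∀ a, Function.Periodic (fun θ => (a, θ) ∈ S) (2 * π)) (s : ℝ) :
    needleMeasure P (rotateNeedle s ⁻¹' S) = needleMeasure P S := by
  rw [needleMeasure, Measure.prod_apply (measurable_rotateNeedle s hS), Measure.prod_apply hS]
  refine lintegral_congr fun a => ?_
  simp only [Measure.restrict_apply' measurableSet_Ioc]
  exact volume_preimage_add_inter_Ioc (measurable_prodMk_left hS) (by positivity) (hper a) s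

theorem needleMeasure_landingNeedles_inter_preimage_hopNeedle_le (hP : MeasurableSet P)
    {S : Set (Plane × ℝ)} (hS : MeasurableSet S) :
    needleMeasure P (landingNeedles P ∩ hopNeedle ⁻¹' S) ≤ needleMeasure P S := by
  rw [needleMeasure, Measure.prod_apply_symm ((measurableSet_landingNeedles hP).inter
    (measurable_hopNeedle hS)), Measure.prod_apply_symm hS]
  refine lintegral_mono fun θ => ?_
  have hslice : (fun a => (a, θ)) ⁻¹' (landingNeedles P ∩ hopNeedle ⁻¹' S) =
      (· + dir θ) ⁻¹' ((fun a => (a, θ)) ⁻¹' S ∩ P) := by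
    ext a
    simp [landingNeedles, hopNeedle, and_comm]
  rw [hslice, Measure.restrict_apply' hP, Measure.restrict_apply' hP]
  calc volume ((· + dir θ) ⁻¹' ((fun a => (a, θ)) ⁻¹' S ∩ P) ∩ P)
      ≤ volume ((· + dir θ) ⁻¹' ((fun a => (a, θ)) ⁻¹' S ∩ P)) := measure_mono inter_subset_left
    _ = volume ((fun a => (a, θ)) ⁻¹' S ∩ P) := measure_preimage_add_right _ _ _

theorem ptableSet_eq_needleMeasure {k : ℕ} {c : Plane → Fin k} (hc : Measurable c)
    (hP : MeasurableSet P) :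
    ptableSet c P = (needleMeasure P (sameColorNeedles c P)).toReal /
      (needleMeasure P (landingNeedles P)).toReal := by
  rw [ptableSet, ← integral_indicator_eq_needleMeasure P (measurableSet_sameColorNeedles hc hP),
    ← integral_indicator_eq_needleMeasure P (measurableSet_landingNeedles hP)]
  congr 2; ext a; congr 1; ext θ
  classical
  rw [indicator_apply, Pi.one_apply]
  congr

theorem prod_univ_subset_union_sameColorNeedles {Q : Set Plane}
    (hQ : ∀ a ∈ Q, ∀ θ, a + dir θ ∈ P) (c : Plane → Fin 2) :
    Q ×ˢ univ ⊆ sameColorNeedles c P ∪ rotateNeedle (π / 3) ⁻¹' sameColorNeedles c P ∪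
      (landingNeedles P ∩ hopNeedle ⁻¹' (rotateNeedle (2 * π / 3) ⁻¹' sameColorNeedles c P)) := by
  rintro ⟨a, θ⟩ ⟨ha, -⟩
  have htriangle : a + dir θ + dir (θ + 2 * π / 3) = a + dir (θ + π / 3) := by
    rw [add_assoc, dir_add_dir_add_two_pi_div_three]
  simp only [mem_union, mem_inter_iff, mem_preimage, sameColorNeedles, landingNeedles,
    rotateNeedle, hopNeedle, mem_ofPred_eq, htriangle, hQ a ha, and_true, true_and]
  exact or_assoc.2 <| fin_two_eq_or_eq_or_eq _ _ _

theorem needleMeasure_prod_univ_le_three_mul {Q : Set Plane} (hP : MeasurableSet P)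
    (hQ : ∀ a ∈ Q, ∀ θ, a + dir θ ∈ P) {c : Plane → Fin 2} (hc : Measurable c) :
    needleMeasure P (Q ×ˢ univ) ≤ 3 * needleMeasure P (sameColorNeedles c P) := by
  set S := sameColorNeedles c P
  have hS := measurableSet_sameColorNeedles hc hP
  have hrot := needleMeasure_preimage_rotateNeedle (P := P) hS (periodic_mem_sameColorNeedles c P)
  calc needleMeasure P (Q ×ˢ univ)
      ≤ needleMeasure P (S ∪ rotateNeedle (π / 3) ⁻¹' S ∪
          (landingNeedles P ∩ hopNeedle ⁻¹' (rotateNeedle (2 * π / 3) ⁻¹' S))) :=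
        measure_mono (prod_univ_subset_union_sameColorNeedles hQ c)
    _ ≤ needleMeasure P S + needleMeasure P (rotateNeedle (π / 3) ⁻¹' S) +
          needleMeasure P (rotateNeedle (2 * π / 3) ⁻¹' S) :=
        (measure_union_le _ _).trans (add_le_add (measure_union_le _ _)
          (needleMeasure_landingNeedles_inter_preimage_hopNeedle_le hP
            (measurable_rotateNeedle _ hS)))
    _ = 3 * needleMeasure P S := by rw [hrot, hrot]; ring

theorem needleMeasure_prod_univ {Q : Set Plane} (hQP : Q ⊆ P) :
    needleMeasure P (Q ×ˢ univ) = volume Q * ENNReal.ofReal (2 * π) := by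
  rw [needleMeasure, Measure.prod_prod, Measure.restrict_eq_self _ hQP,
    Measure.restrict_apply_univ, Real.volume_Ioc, sub_zero]

theorem div_volume_le_ptableSet {c : Plane → Fin 2} (hc : Measurable c) (hP : MeasurableSet P)
    (hPfin : volume P ≠ ⊤) {Q : Set Plane} (hQP : Q ⊆ P) (hQ : ∀ a ∈ Q, ∀ θ, a + dir θ ∈ P) :
    (volume Q).toReal / (3 * (volume P).toReal) ≤ ptableSet c P := by
  have hfin : ∀ S, needleMeasure P S ≠ ⊤ := fun S =>
    ne_top_of_le_ne_top (by rw [needleMeasure_univ]; finiteness) (measure_mono (subset_univ S))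
  set n := (needleMeasure P (sameColorNeedles c P)).toReal
  set d := (needleMeasure P (landingNeedles P)).toReal
  have hQn : (volume Q).toReal * (2 * π) ≤ 3 * n := by
    have h := ENNReal.toReal_mono (ENNReal.mul_ne_top (by norm_num) (hfin _))
      (needleMeasure_prod_univ_le_three_mul hP hQ hc)
    rwa [needleMeasure_prod_univ hQP, ENNReal.toReal_mul, ENNReal.toReal_mul,
      ENNReal.toReal_ofReal (by positivity), ENNReal.toReal_ofNat] at h
  have hdP : d ≤ (volume P).toReal * (2 * π) := by
    have h := ENNReal.toReal_mono (hfin univ) (measure_mono (subset_univ (landingNeedles P)))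
    rwa [needleMeasure_univ, ENNReal.toReal_mul, ENNReal.toReal_ofReal (by positivity)] at h
  have hnd : n ≤ d := ENNReal.toReal_mono (hfin _) (measure_mono fun x hx => hx.2)
  rw [ptableSet_eq_needleMeasure hc hP]
  rcases (ENNReal.toReal_nonneg (a := volume P)).eq_or_lt with hP0 | hP0
  · rw [← hP0, mul_zero, div_zero]; positivity
  rcases (ENNReal.toReal_nonneg (a := needleMeasure P (landingNeedles P))).eq_or_lt
    with hd0 | hd0
  · have : (volume Q).toReal = 0 := by nlinarith [ENNReal.toReal_nonneg (a := volume Q), pi_pos]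
    rw [this, zero_div, ← hd0, div_zero]
  rw [div_le_div_iff₀ (by positivity) hd0]
  nlinarith [ENNReal.toReal_nonneg (a := volume Q), pi_pos]

end

theorem measurableSet_square (R : ℝ) : MeasurableSet (square R) :=
  (measurableSet_Icc.preimage (measurable_pi_apply 0 |>.comp (WithLp.measurable_ofLp 2 _))).inter
    (measurableSet_Icc.preimage (measurable_pi_apply 1 |>.comp (WithLp.measurable_ofLp 2 _)))

theorem volume_square {R : ℝ} (hR : 0 ≤ R) :
    volume (square R) = ENNReal.ofReal ((2 * R) ^ 2) := by
  have h : square R =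
      (MeasurableEquiv.toLp 2 (Fin 2 → ℝ)).symm ⁻¹' univ.pi fun _ => Icc (-R) R := by
    ext x
    simp only [square, mem_preimage, mem_univ_pi, Fin.forall_fin_two]
    rfl
  rw [h, (EuclideanSpace.volume_preserving_symm_measurableEquiv_toLp (Fin 2)).measure_preimage
    (MeasurableSet.univ_pi fun _ => measurableSet_Icc).nullMeasurableSet, volume_pi_pi]
  simp only [Real.volume_Icc, Finset.prod_const, Finset.card_univ, Fintype.card_fin]
  rw [sub_neg_eq_add, ← two_mul, ← ENNReal.ofReal_pow (by positivity)]

theorem square_mono {R R' : ℝ} (h : R ≤ R') : square R ⊆ square R' :=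
  fun _ ⟨⟨h1, h2⟩, h3, h4⟩ => ⟨⟨by linarith, by linarith⟩, by linarith, by linarith⟩

theorem add_dir_mem_square {R : ℝ} {a : Plane} (ha : a ∈ square (R - 1)) (θ : ℝ) :
    a + dir θ ∈ square R := by
  obtain ⟨⟨h1, h2⟩, h3, h4⟩ := ha
  have e0 : (a + dir θ) 0 = a 0 + cos θ := rfl
  have e1 : (a + dir θ) 1 = a 1 + sin θ := rfl
  refine ⟨⟨?_, ?_⟩, ?_, ?_⟩ <;> simp only [e0, e1] <;>
    linarith [neg_one_le_cos θ, cos_le_one θ, neg_one_le_sin θ, sin_le_one θ]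

theorem one_sub_inv_sq_div_three_le_ptable {c : Plane → Fin 2} (hc : Measurable c) {R : ℝ}
    (hR : 1 ≤ R) :
    (1 - R⁻¹) ^ 2 / 3 ≤ ptable c R := by
  have h := div_volume_le_ptableSet hc (measurableSet_square R)
    (by simp [volume_square (by linarith : 0 ≤ R)]) (square_mono (by linarith : R - 1 ≤ R))
    fun a ha => add_dir_mem_square ha
  rwa [volume_square (by linarith), volume_square (by linarith),
    ENNReal.toReal_ofReal (by positivity), ENNReal.toReal_ofReal (by positivity),
    show (2 * (R - 1)) ^ 2 / (3 * (2 * R) ^ 2) = (1 - R⁻¹) ^ 2 / 3 by field_simp] at h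

theorem stmt9 (c : Plane → Fin 2) (hc : Measurable c) (p : ℝ)
    (hp : Filter.Tendsto (fun R : ℝ => ptable c R) Filter.atTop (nhds p)) :
    1 / 3 ≤ p := by
  have hlim : Tendsto (fun R : ℝ => (1 - R⁻¹) ^ 2 / 3) atTop (nhds (1 / 3)) := by
    simpa using
      ((tendsto_const_nhds (x := (1 : ℝ))).sub tendsto_inv_atTop_zero |>.pow 2).div_const 3
  have hbound : ∀ᶠ R in atTop, (1 - R⁻¹) ^ 2 / 3 ≤ ptable c R :=
    eventually_atTop.2 ⟨1, fun R hR => one_sub_inv_sq_div_three_le_ptable hc hR⟩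
  exact le_of_tendsto_of_tendsto hlim hp hbound

end
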